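/- (Theorem 2.1(3)) Let (u₁,u₂,u₃,u₁*,u₂*,u₃*,k₁,k₂,k₁*,k₂*) be a closed dual timelike Frenet frame of period T, let φ, φ* ∈ ℝ, and let (v₁,v₂,v₃,v₁*,v₂*,v₃*) be the parallel frame with curvature data p, p*, q, q*. Then at every t with p(t) ≠ 0, the drall of the closed ruled surface generated by (v₁,v₁*) satisfies ⟨v₁'(t), v₁*'(t)⟩ / ⟨v₁'(t), v₁'(t)⟩ = p*(t)/p(t) = (k₁* cosh φ + k₂* sinh φ)/(k₁ cosh φ + k₂ sinh φ) + φ*·(k₁ sinh φ + k₂ cosh φ)/(k₁ cosh φ + k₂ sinh φ), with k₁, k₂, k₁*, k₂* evaluated at t. -/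

import Mathlib

noncomputable section

/-- The Lorentzian inner product on `ℝ³`: `⟨a,b⟩ = -a₁b₁ + a₂b₂ + a₃b₃`. -/
def lin (a b : Fin 3 → ℝ) : ℝ := -(a 0 * b 0) + a 1 * b 1 + a 2 * b 2

/-- A closed dual timelike Frenet frame of period `T > 0`: differentiable `T`-periodic
frame maps `u₁,u₂,u₃` with dual parts `u₁s,u₂s,u₃s`, continuous `T`-periodic curvature
data `k₁,k₂,k₁s,k₂s`, Lorentzian orthonormality (with `u₁` timelike), the dual unit
conditions `⟨uᵢ,uⱼ*⟩ + ⟨uᵢ*,uⱼ⟩ = 0`, and the (dual) Frenet equations. -/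
structure DualFrenetFrame (T : ℝ) where
  u₁ : ℝ → Fin 3 → ℝ
  u₂ : ℝ → Fin 3 → ℝ
  u₃ : ℝ → Fin 3 → ℝ
  u₁s : ℝ → Fin 3 → ℝ
  u₂s : ℝ → Fin 3 → ℝ
  u₃s : ℝ → Fin 3 → ℝ
  k₁ : ℝ → ℝ
  k₂ : ℝ → ℝ
  k₁s : ℝ → ℝ
  k₂s : ℝ → ℝ
  hT : 0 < T
  diff_u₁ : Differentiable ℝ u₁
  diff_u₂ : Differentiable ℝ u₂
  diff_u₃ : Differentiable ℝ u₃
  diff_u₁s : Differentiable ℝ u₁s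
  diff_u₂s : Differentiable ℝ u₂s
  diff_u₃s : Differentiable ℝ u₃s
  cont_k₁ : Continuous k₁
  cont_k₂ : Continuous k₂
  cont_k₁s : Continuous k₁s
  cont_k₂s : Continuous k₂s
  per_u₁ : Function.Periodic u₁ T
  per_u₂ : Function.Periodic u₂ T
  per_u₃ : Function.Periodic u₃ T
  per_u₁s : Function.Periodic u₁s T
  per_u₂s : Function.Periodic u₂s T
  per_u₃s : Function.Periodic u₃s T
  per_k₁ : Function.Periodic k₁ T
  per_k₂ : Function.Periodic k₂ T
  per_k₁s : Function.Periodic k₁s T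
  per_k₂s : Function.Periodic k₂s T
  h₁₁ : ∀ t, lin (u₁ t) (u₁ t) = -1
  h₂₂ : ∀ t, lin (u₂ t) (u₂ t) = 1
  h₃₃ : ∀ t, lin (u₃ t) (u₃ t) = 1
  h₁₂ : ∀ t, lin (u₁ t) (u₂ t) = 0
  h₁₃ : ∀ t, lin (u₁ t) (u₃ t) = 0
  h₂₃ : ∀ t, lin (u₂ t) (u₃ t) = 0
  hd₁₁ : ∀ t, lin (u₁ t) (u₁s t) + lin (u₁s t) (u₁ t) = 0
  hd₁₂ : ∀ t, lin (u₁ t) (u₂s t) + lin (u₁s t) (u₂ t) = 0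
  hd₁₃ : ∀ t, lin (u₁ t) (u₃s t) + lin (u₁s t) (u₃ t) = 0
  hd₂₁ : ∀ t, lin (u₂ t) (u₁s t) + lin (u₂s t) (u₁ t) = 0
  hd₂₂ : ∀ t, lin (u₂ t) (u₂s t) + lin (u₂s t) (u₂ t) = 0
  hd₂₃ : ∀ t, lin (u₂ t) (u₃s t) + lin (u₂s t) (u₃ t) = 0
  hd₃₁ : ∀ t, lin (u₃ t) (u₁s t) + lin (u₃s t) (u₁ t) = 0
  hd₃₂ : ∀ t, lin (u₃ t) (u₂s t) + lin (u₃s t) (u₂ t) = 0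
  hd₃₃ : ∀ t, lin (u₃ t) (u₃s t) + lin (u₃s t) (u₃ t) = 0
  frenet₁ : ∀ t, deriv u₁ t = k₁ t • u₂ t
  frenet₂ : ∀ t, deriv u₂ t = k₁ t • u₁ t - k₂ t • u₃ t
  frenet₃ : ∀ t, deriv u₃ t = k₂ t • u₂ t
  frenet₁s : ∀ t, deriv u₁s t = k₁s t • u₂ t + k₁ t • u₂s t
  frenet₂s : ∀ t, deriv u₂s t =
    k₁s t • u₁ t - k₂s t • u₃ t + k₁ t • u₁s t - k₂ t • u₃s t
  frenet₃s : ∀ t, deriv u₃s t = k₂s t • u₂ t + k₂ t • u₂s t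

/-- `∮ f = ∫₀ᵀ f(t) dt`. -/
def oint (T : ℝ) (f : ℝ → ℝ) : ℝ := ∫ t in (0:ℝ)..T, f t

/-- The real Steiner vector `d` at `t₀`. -/
def dvec {T : ℝ} (F : DualFrenetFrame T) (t₀ : ℝ) : Fin 3 → ℝ :=
  oint T F.k₂ • F.u₁ t₀ - oint T F.k₁ • F.u₃ t₀

/-- The dual Steiner vector `d*` at `t₀`. -/
def dvecs {T : ℝ} (F : DualFrenetFrame T) (t₀ : ℝ) : Fin 3 → ℝ :=
  oint T F.k₂ • F.u₁s t₀ + oint T F.k₂s • F.u₁ t₀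
    - oint T F.k₁ • F.u₃s t₀ - oint T F.k₁s • F.u₃ t₀

/-- Real part of the parallel frame vector `v₁ = cosh φ · u₁ + sinh φ · u₃`. -/
def pv₁ {T : ℝ} (F : DualFrenetFrame T) (φ : ℝ) : ℝ → Fin 3 → ℝ :=
  fun t => Real.cosh φ • F.u₁ t + Real.sinh φ • F.u₃ t

/-- Real part of the parallel frame vector `v₂ = u₂`. -/
def pv₂ {T : ℝ} (F : DualFrenetFrame T) : ℝ → Fin 3 → ℝ := F.u₂

/-- Real part of the parallel frame vector `v₃ = -sinh φ · u₁ - cosh φ · u₃`. -/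
def pv₃ {T : ℝ} (F : DualFrenetFrame T) (φ : ℝ) : ℝ → Fin 3 → ℝ :=
  fun t => -(Real.sinh φ • F.u₁ t) - Real.cosh φ • F.u₃ t

/-- Dual part `v₁*` of the parallel frame. -/
def pv₁s {T : ℝ} (F : DualFrenetFrame T) (φ φs : ℝ) : ℝ → Fin 3 → ℝ :=
  fun t => Real.cosh φ • F.u₁s t + Real.sinh φ • F.u₃s t
    + φs • (Real.sinh φ • F.u₁ t + Real.cosh φ • F.u₃ t)

/-- Dual part `v₂* = u₂*` of the parallel frame. -/
def pv₂s {T : ℝ} (F : DualFrenetFrame T) : ℝ → Fin 3 → ℝ := F.u₂s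

/-- Dual part `v₃*` of the parallel frame. -/
def pv₃s {T : ℝ} (F : DualFrenetFrame T) (φ φs : ℝ) : ℝ → Fin 3 → ℝ :=
  fun t => -(Real.sinh φ • F.u₁s t) - Real.cosh φ • F.u₃s t
    - φs • (Real.cosh φ • F.u₁ t + Real.sinh φ • F.u₃ t)

/-- Curvature `p = k₁ cosh φ + k₂ sinh φ` of the parallel frame. -/
def pp {T : ℝ} (F : DualFrenetFrame T) (φ : ℝ) : ℝ → ℝ :=
  fun t => F.k₁ t * Real.cosh φ + F.k₂ t * Real.sinh φ

/-- Dual curvature `p*` of the parallel frame. -/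
def pps {T : ℝ} (F : DualFrenetFrame T) (φ φs : ℝ) : ℝ → ℝ :=
  fun t => F.k₁s t * Real.cosh φ + F.k₂s t * Real.sinh φ
    + φs * (F.k₁ t * Real.sinh φ + F.k₂ t * Real.cosh φ)

/-- Torsion `q = -k₁ sinh φ - k₂ cosh φ` of the parallel frame. -/
def pq {T : ℝ} (F : DualFrenetFrame T) (φ : ℝ) : ℝ → ℝ :=
  fun t => -(F.k₁ t * Real.sinh φ) - F.k₂ t * Real.cosh φ

/-- Dual torsion `q*` of the parallel frame. -/
def pqs {T : ℝ} (F : DualFrenetFrame T) (φ φs : ℝ) : ℝ → ℝ :=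
  fun t => -(F.k₁s t * Real.sinh φ) - F.k₂s t * Real.cosh φ
    - φs * (F.k₁ t * Real.cosh φ + F.k₂ t * Real.sinh φ)

/-! The parallel frame satisfies `v₁' = p v₂` and `v₁*' = p* v₂ + p v₂*`, so the drall of
`(v₁, v₁*)` is `(p p* ⟨u₂,u₂⟩ + p² ⟨u₂,u₂*⟩) / (p² ⟨u₂,u₂⟩)`; since `u₂` is a unit vector and the
dual unit condition gives `⟨u₂,u₂*⟩ = 0`, this is `p*/p`. -/

theorem lin_comm (a b : Fin 3 → ℝ) : lin a b = lin b a := by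
  unfold lin; ring

theorem lin_smul_left (c : ℝ) (a b : Fin 3 → ℝ) : lin (c • a) b = c * lin a b := by
  simp only [lin, Pi.smul_apply, smul_eq_mul]; ring

theorem lin_smul_right (c : ℝ) (a b : Fin 3 → ℝ) : lin a (c • b) = c * lin a b := by
  rw [lin_comm, lin_smul_left, lin_comm]

theorem lin_add_right (a b c : Fin 3 → ℝ) : lin a (b + c) = lin a b + lin a c := by
  simp only [lin, Pi.add_apply]; ring

/-- For `a = 0` both sides are `0`, by `x / 0 = 0`. -/
theorem lin_drall_eq_div {e es : Fin 3 → ℝ} (he : lin e e = 1) (hes : lin e es = 0)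
    (a as : ℝ) : lin (a • e) (as • e + a • es) / lin (a • e) (a • e) = as / a := by
  simp only [lin_add_right, lin_smul_left, lin_smul_right, he, hes, mul_zero, add_zero, mul_one]
  rcases eq_or_ne a 0 with rfl | ha
  · simp
  · field_simp

namespace DualFrenetFrame

variable {T : ℝ} (F : DualFrenetFrame T)

theorem lin_u₂_u₂s (t : ℝ) : lin (F.u₂ t) (F.u₂s t) = 0 := by
  linarith [F.hd₂₂ t, lin_comm (F.u₂ t) (F.u₂s t)]

theorem hasDerivAt_u₁ (t : ℝ) : HasDerivAt F.u₁ (F.k₁ t • F.u₂ t) t :=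
  F.frenet₁ t ▸ (F.diff_u₁ t).hasDerivAt

theorem hasDerivAt_u₃ (t : ℝ) : HasDerivAt F.u₃ (F.k₂ t • F.u₂ t) t :=
  F.frenet₃ t ▸ (F.diff_u₃ t).hasDerivAt

theorem hasDerivAt_u₁s (t : ℝ) :
    HasDerivAt F.u₁s (F.k₁s t • F.u₂ t + F.k₁ t • F.u₂s t) t :=
  F.frenet₁s t ▸ (F.diff_u₁s t).hasDerivAt

theorem hasDerivAt_u₃s (t : ℝ) :
    HasDerivAt F.u₃s (F.k₂s t • F.u₂ t + F.k₂ t • F.u₂s t) t :=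
  F.frenet₃s t ▸ (F.diff_u₃s t).hasDerivAt

theorem hasDerivAt_pv₁ (φ t : ℝ) : HasDerivAt (pv₁ F φ) (pp F φ t • F.u₂ t) t :=
  (((F.hasDerivAt_u₁ t).const_smul (Real.cosh φ)).add
    ((F.hasDerivAt_u₃ t).const_smul (Real.sinh φ))).congr_deriv (by rw [pp]; module)

theorem hasDerivAt_pv₁s (φ φs t : ℝ) :
    HasDerivAt (pv₁s F φ φs) (pps F φ φs t • F.u₂ t + pp F φ t • F.u₂s t) t :=
  ((((F.hasDerivAt_u₁s t).const_smul (Real.cosh φ)).add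
    ((F.hasDerivAt_u₃s t).const_smul (Real.sinh φ))).add
    ((((F.hasDerivAt_u₁ t).const_smul (Real.sinh φ)).add
      ((F.hasDerivAt_u₃ t).const_smul (Real.cosh φ))).const_smul φs)).congr_deriv
    (by rw [pps, pp]; module)

end DualFrenetFrame

theorem drall_v₁_general {T : ℝ} (F : DualFrenetFrame T) (φ φs : ℝ) (t : ℝ) :
    lin (deriv (pv₁ F φ) t) (deriv (pv₁s F φ φs) t)
        / lin (deriv (pv₁ F φ) t) (deriv (pv₁ F φ) t)
      = pps F φ φs t / pp F φ t ∧
    pps F φ φs t / pp F φ t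
      = (F.k₁s t * Real.cosh φ + F.k₂s t * Real.sinh φ)
          / (F.k₁ t * Real.cosh φ + F.k₂ t * Real.sinh φ)
        + φs * (F.k₁ t * Real.sinh φ + F.k₂ t * Real.cosh φ)
          / (F.k₁ t * Real.cosh φ + F.k₂ t * Real.sinh φ) := by
  refine ⟨?_, add_div _ _ _⟩
  rw [(F.hasDerivAt_pv₁ φ t).deriv, (F.hasDerivAt_pv₁s φ φs t).deriv]
  exact lin_drall_eq_div (F.h₂₂ t) (F.lin_u₂_u₂s t) _ _

/-- Theorem 2.1(3): the drall of the ruled surface generated by `(v₁,v₁*)` is `p*/p`. -/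
theorem drall_v₁ {T : ℝ} (F : DualFrenetFrame T) (φ φs : ℝ) (t : ℝ)
    (h : pp F φ t ≠ 0) :
    lin (deriv (pv₁ F φ) t) (deriv (pv₁s F φ φs) t)
        / lin (deriv (pv₁ F φ) t) (deriv (pv₁ F φ) t)
      = pps F φ φs t / pp F φ t ∧
    pps F φ φs t / pp F φ t
      = (F.k₁s t * Real.cosh φ + F.k₂s t * Real.sinh φ)
          / (F.k₁ t * Real.cosh φ + F.k₂ t * Real.sinh φ)
        + φs * (F.k₁ t * Real.sinh φ + F.k₂ t * Real.cosh φ)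
          / (F.k₁ t * Real.cosh φ + F.k₂ t * Real.sinh φ) :=
  drall_v₁_general F φ φs t
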